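/- arXiv:1705.06651 — 3 statements merged into one kernel-verified Lean document; each statement's English description precedes it below -/
import Mathlib

section
/- Let σ ∈ Sₙ have cycle type λ₁^{e₁}···λᵣ^{eᵣ} with λ₁ < ··· < λᵣ and λ₁^{e₁} ≠ 1². If the center of Z_{Sₙ}(σ) equals the center of Z_{Sₙ}(τ) for another permutation τ (with appropriate representatives), then σ and τ have the same cycle type. More precisely: the orbit sizes (with multiplicity) of the action of Z(Z_{Sₙ}(σ)) on {1,…,n} recover the multiset of parts of the cycle type of σ, provided the cycle type is not of the form 1²ν. -/
/-- The full cycle type of a permutation of `Fin n`: the multiset of its cycle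
lengths, counting each fixed point as a cycle of length 1. -/
def fullCycleType {n : ℕ} (σ : Equiv.Perm (Fin n)) : Multiset ℕ :=
  σ.cycleType + Multiset.replicate (n - σ.support.card) 1

/-- The center `Z(Z_{Sₙ}(σ))` of the centralizer of `σ`, viewed as a subgroup of `Sₙ`. -/
def centerOfCentralizer {n : ℕ} (σ : Equiv.Perm (Fin n)) : Subgroup (Equiv.Perm (Fin n)) :=
  Subgroup.centralizer {σ} ⊓
    Subgroup.centralizer (Subgroup.centralizer {σ} : Subgroup (Equiv.Perm (Fin n)))

/-! On the support of `σ`, an element of `Z(C(σ))` commutes with every cycle of `σ`, so it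
preserves the support of each cycle, on which the powers of `σ` already act transitively: there
the orbits are the cycles. A fixed point `x` of `σ` stays fixed: if `π x ≠ x`, a third fixed
point `z` puts `swap x z` into `C(σ)`, and `π` does not commute with it. So the points in orbits
of size `k` are the points of the `k`-cycles of `σ`, fixed points counting as `1`-cycles. -/

open Equiv Equiv.Perm Finset

namespace Subgroup

variable {G : Type*} [Group G]

theorem mem_centralizer_centralizer_singleton_self (g : G) :
    g ∈ centralizer (centralizer {g} : Set G) :=
  mem_centralizer_iff.mpr fun _ ↦ mem_centralizer_singleton_iff.mp

theorem centralizer_centralizer_singleton_le (g : G) :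
    centralizer (centralizer {g} : Set G) ≤ centralizer {g} :=
  centralizer_le (Set.singleton_subset_iff.mpr (mem_centralizer_singleton_iff.mpr rfl))

end Subgroup

namespace Equiv.Perm

variable {α : Type*} [DecidableEq α] {σ π : Perm α}

theorem swap_mem_centralizer_singleton {a b : α} (ha : σ a = a) (hb : σ b = b) :
    swap a b ∈ Subgroup.centralizer {σ} := by
  have hconj := swap_apply_apply σ a b
  rw [ha, hb, eq_mul_inv_iff_mul_eq] at hconj
  exact Subgroup.mem_centralizer_singleton_iff.mpr hconj

variable [Fintype α]

theorem cycleOf_mem_centralizer_singleton (σ : Perm α) (x : α) :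
    σ.cycleOf x ∈ Subgroup.centralizer {σ} := by
  by_cases hx : x ∈ σ.support
  · exact Subgroup.mem_centralizer_singleton_iff.mpr
      (self_mem_cycle_factors_commute (cycleOf_mem_cycleFactorsFinset_iff.mpr hx)).eq
  · rw [(cycleOf_eq_one_iff σ).mpr (notMem_support.mp hx)]
    exact one_mem _

theorem apply_eq_self_of_mem_centralizer_centralizer
    (hσ : Fintype.card α - #σ.support ≠ 2)
    (hπ : π ∈ Subgroup.centralizer (Subgroup.centralizer {σ} : Set (Perm α)))
    {x : α} (hx : σ x = x) : π x = x := by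
  have hπσ : Commute π σ :=
    (hπ σ (Subgroup.mem_centralizer_singleton_iff.mpr rfl)).symm
  have hπx : σ (π x) = π x := by rw [← mul_apply, ← hπσ.eq, mul_apply, hx]
  by_contra hne
  have hpair : {x, π x} ⊆ σ.supportᶜ := by
    simp [insert_subset_iff, hx, hπx]
  have htwo : #{x, π x} = 2 := card_pair (Ne.symm hne)
  have hcard : #σ.supportᶜ = Fintype.card α - #σ.support := card_compl _
  obtain ⟨z, hz, hzx⟩ := exists_mem_notMem_of_card_lt_card
    (s := {x, π x}) (t := σ.supportᶜ) (by have := card_le_card hpair; omega)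
  simp only [mem_insert, mem_singleton, not_or] at hzx
  have hcomm : π * swap x z = swap x z * π :=
    (hπ _ (swap_mem_centralizer_singleton hx (notMem_support.mp (mem_compl.mp hz)))).symm
  have hcomm_x := congrArg (· x) hcomm
  simp only [mul_apply, swap_apply_left, swap_apply_of_ne_of_ne hne (Ne.symm hzx.2)] at hcomm_x
  exact hzx.1 (π.injective hcomm_x)

theorem orbit_centralizer_centralizer_of_mem_support {x : α} (hx : x ∈ σ.support) :
    MulAction.orbit (Subgroup.centralizer (Subgroup.centralizer {σ} : Set (Perm α))) x =
      (σ.cycleOf x).support := by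
  ext y
  constructor
  · rintro ⟨⟨π, hπ⟩, rfl⟩
    have hcomm : Commute π (σ.cycleOf x) := (hπ _ (cycleOf_mem_centralizer_singleton σ x)).symm
    exact (mem_support_iff_of_commute hcomm x).mpr (mem_support_cycleOf_iff.mpr ⟨.refl _ _, hx⟩)
  · intro hy
    obtain ⟨k, rfl⟩ := (mem_support_cycleOf_iff.mp hy).1
    exact ⟨⟨σ ^ k, zpow_mem (Subgroup.mem_centralizer_centralizer_singleton_self σ) k⟩,
      rfl⟩

theorem orbit_centralizer_centralizer_of_notMem_support
    (hσ : Fintype.card α - #σ.support ≠ 2) {x : α} (hx : x ∉ σ.support) :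
    MulAction.orbit (Subgroup.centralizer (Subgroup.centralizer {σ} : Set (Perm α))) x = {x} :=
  Set.eq_singleton_iff_unique_mem.mpr ⟨MulAction.mem_orbit_self x, by
    rintro _ ⟨⟨π, hπ⟩, rfl⟩
    exact apply_eq_self_of_mem_centralizer_centralizer hσ hπ (notMem_support.mp hx)⟩

theorem card_filter_card_support_cycleOf_eq (σ : Perm α) (k : ℕ) :
    #{x ∈ σ.support | #(σ.cycleOf x).support = k} = k * σ.cycleType.count k := by
  have hfilter : {x ∈ σ.support | #(σ.cycleOf x).support = k} =
      {c ∈ σ.cycleFactorsFinset | #c.support = k}.biUnion support := by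
    ext x
    simp only [mem_filter, mem_biUnion]
    constructor
    · rintro ⟨hx, hk⟩
      exact ⟨σ.cycleOf x, ⟨cycleOf_mem_cycleFactorsFinset_iff.mpr hx, hk⟩,
        mem_support_cycleOf_iff.mpr ⟨.refl _ _, hx⟩⟩
    · rintro ⟨c, ⟨hc, hk⟩, hxc⟩
      rw [← cycle_is_cycleOf hxc hc]
      exact ⟨mem_cycleFactorsFinset_support_le hc hxc, hk⟩
  have hdisj : Set.PairwiseDisjoint ↑{c ∈ σ.cycleFactorsFinset | #c.support = k} support :=
    fun c hc d hd hcd => (cycleFactorsFinset_pairwise_disjoint σ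
      (mem_filter.mp hc).1 (mem_filter.mp hd).1 hcd).disjoint_support
  rw [hfilter, card_biUnion hdisj, sum_congr rfl fun c hc => (mem_filter.mp hc).2, sum_const,
    smul_eq_mul, mul_comm, cycleType, Multiset.count_map]
  simp only [Function.comp_apply, eq_comm (a := k)]
  rfl

theorem natCard_orbit_centralizer_centralizer_eq (hσ : Fintype.card α - #σ.support ≠ 2)
    (k : ℕ) :
    Nat.card {x : α // Nat.card (MulAction.orbit
        (Subgroup.centralizer (Subgroup.centralizer {σ} : Set (Perm α))) x) = k} =
      k * σ.partition.parts.count k := by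
  have hsplit : ({x | Nat.card (MulAction.orbit
        (Subgroup.centralizer (Subgroup.centralizer {σ} : Set (Perm α))) x) = k} : Finset α) =
      {x ∈ σ.support | #(σ.cycleOf x).support = k} ∪ {x ∈ σ.supportᶜ | 1 = k} := by
    ext x
    simp only [mem_union, mem_filter, mem_univ, true_and, mem_compl]
    by_cases hx : x ∈ σ.support
    · simp only [orbit_centralizer_centralizer_of_mem_support hx, Nat.card_coe_set_eq,
        Set.ncard_coe_finset]
      simp [hx]
    · simp only [orbit_centralizer_centralizer_of_notMem_support hσ hx, Nat.card_unique]
      simp [hx]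
  have hfixed : #{x ∈ σ.supportᶜ | 1 = k} =
      k * (Multiset.replicate (Fintype.card α - #σ.support) 1).count k := by
    rw [filter_const, Multiset.count_replicate]
    split_ifs with hk
    · rw [← hk, card_compl, one_mul]
    · rw [card_empty, mul_zero]
  rw [Nat.card_eq_fintype_card, Fintype.card_subtype, hsplit,
    card_union_of_disjoint (disjoint_filter_filter disjoint_compl_right),
    card_filter_card_support_cycleOf_eq, hfixed, parts_partition, Multiset.count_add, mul_add]

theorem partition_eq_of_centralizer_centralizer_eq {τ : Perm α}
    (hσ : Fintype.card α - #σ.support ≠ 2) (hτ : Fintype.card α - #τ.support ≠ 2)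
    (h : Subgroup.centralizer (Subgroup.centralizer {σ} : Set (Perm α)) =
      Subgroup.centralizer (Subgroup.centralizer {τ} : Set (Perm α))) :
    σ.partition = τ.partition := by
  ext k
  rcases k.eq_zero_or_pos with rfl | hk
  · simp only [Multiset.count_eq_zero_of_notMem fun h ↦ (Nat.Partition.parts_pos _ h).ne rfl]
  · refine Nat.eq_of_mul_eq_mul_left hk ?_
    rw [← natCard_orbit_centralizer_centralizer_eq hσ,
      ← natCard_orbit_centralizer_centralizer_eq hτ, h]

end Equiv.Perm

theorem centerOfCentralizer_eq {n : ℕ} (σ : Equiv.Perm (Fin n)) :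
    centerOfCentralizer σ = Subgroup.centralizer (Subgroup.centralizer {σ}) :=
  inf_eq_right.mpr (Subgroup.centralizer_centralizer_singleton_le σ)

theorem fullCycleType_eq_parts_partition {n : ℕ} (σ : Equiv.Perm (Fin n)) :
    fullCycleType σ = σ.partition.parts := by
  rw [parts_partition, Fintype.card_fin, fullCycleType]

/-- Provided the cycle type of `σ` is not of the form `1²ν` (i.e. `σ` does not have
exactly two fixed points), the orbit sizes (with multiplicity) of the action of
`Z(Z_{Sₙ}(σ))` on `{1,…,n}` recover the multiset of parts of the cycle type of `σ`:
for each `k`, the number of points lying in an orbit of size `k` is `k` times the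
multiplicity of the part `k`.  Consequently, if `τ` is another permutation not having
exactly two fixed points and `Z(Z_{Sₙ}(σ)) = Z(Z_{Sₙ}(τ))`, then `σ` and `τ` have the
same cycle type. -/
theorem stmt_16 (n : ℕ) (σ : Equiv.Perm (Fin n)) (hσ : n - σ.support.card ≠ 2) :
    (∀ k : ℕ,
      Nat.card {x : Fin n // Nat.card (MulAction.orbit (centerOfCentralizer σ) x) = k}
        = k * (fullCycleType σ).count k) ∧
    (∀ τ : Equiv.Perm (Fin n), n - τ.support.card ≠ 2 →
      centerOfCentralizer σ = centerOfCentralizer τ →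
      fullCycleType σ = fullCycleType τ) := by
  refine ⟨fun k ↦ ?_, fun τ hτ hZ ↦ ?_⟩
  · rw [centerOfCentralizer_eq, fullCycleType_eq_parts_partition]
    exact natCard_orbit_centralizer_centralizer_eq (by rwa [Fintype.card_fin]) k
  · rw [centerOfCentralizer_eq, centerOfCentralizer_eq] at hZ
    rw [fullCycleType_eq_parts_partition, fullCycleType_eq_parts_partition,
      partition_eq_of_centralizer_centralizer_eq (by rwa [Fintype.card_fin])
        (by rwa [Fintype.card_fin]) hZ]
end

section
/- Let σ ∈ Aₙ have cycle type λ = λ₁¹···λᵣ¹ with all parts distinct and odd, and suppose every λᵢ is a perfect square. Then the two Aₙ-conjugacy classes into which the Sₙ-class of σ splits are not z-conjugate: if x, y represent the two classes, then Z_{Aₙ}(x) and Z_{Aₙ}(y) are not conjugate subgroups in Aₙ. -/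
/-- The centralizer of `z` in the alternating group, viewed as a subgroup of `Sₙ`. -/
def altCentralizer {n : ℕ} (z : Equiv.Perm (Fin n)) : Subgroup (Equiv.Perm (Fin n)) :=
  Subgroup.centralizer {z} ⊓ alternatingGroup (Fin n)

/-!
Suppose `g ∈ Aₙ` carries `Z_{Aₙ}(x)` onto `Z_{Aₙ}(y)` and put `x' = g x g⁻¹`. Then
`y ∈ Z_{Aₙ}(y)` commutes with `x'`. As the cycle lengths of `x'` are distinct and `x'` has at
most one fixed point, `y` acts on the support of each cycle `c` of `x'` as a power `c ^ k`; as `y`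
and `x'` have the same cycle type, each `c ^ k` is again a cycle, so `k` is prime to the length
`m²` of `c`.

Modelling `c` as `r ↦ r + 1` on `ZMod (m²)`, multiplication by `k` conjugates `c` to `c ^ k`, and
it is an even permutation: in base-`m` digits it reads `(a, b) ↦ (k a, k b + t a)`, so its sign
is `s ^ (2 m) = 1`, where `s` is the sign of `a ↦ k a` on `ZMod m`. Gluing these conjugators
over the cycles of `x'` gives an even permutation conjugating `x'` to `y`, so `x` and `y` would
be conjugate in `Aₙ`.
-/

open Equiv Equiv.Perm Finset

lemma Equiv.addRight_pow {G : Type*} [AddGroup G] (t : G) (k : ℕ) :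
    Equiv.addRight t ^ k = Equiv.addRight (k • t) := by
  induction k with
  | zero => ext; simp
  | succ k ih => ext; simp [pow_succ', ih, succ_nsmul, add_assoc]

lemma sign_addRight_of_odd_card {G : Type*} [AddGroup G] [Fintype G] [DecidableEq G]
    (hG : Odd (Fintype.card G)) (t : G) : sign (Equiv.addRight t) = 1 := by
  have h : sign (Equiv.addRight t) ^ Fintype.card G = 1 := by
    rw [← map_pow, Equiv.addRight_pow, card_nsmul_eq_zero]
    simp
  rwa [Int.units_pow_eq_pow_mod_two, Nat.odd_iff.mp hG, pow_one] at h

section Digits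

variable {m : ℕ} [NeZero m]

noncomputable def ZMod.digitsEquiv : ZMod (m * m) ≃ ZMod m × ZMod m :=
  Equiv.ofBijective (fun r => ((r.val : ZMod m), ((r.val / m : ℕ) : ZMod m))) <| by
    refine (Fintype.bijective_iff_injective_and_card _).mpr ⟨fun r s hrs => ?_, by simp⟩
    simp only [Prod.mk.injEq, ZMod.natCast_eq_natCast_iff'] at hrs
    have hdiv (r : ZMod (m * m)) : r.val / m < m := Nat.div_lt_of_lt_mul (ZMod.val_lt r)
    rw [Nat.mod_eq_of_lt (hdiv r), Nat.mod_eq_of_lt (hdiv s)] at hrs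
    apply ZMod.val_injective
    rw [← Nat.mod_add_div r.val m, ← Nat.mod_add_div s.val m, hrs.1, hrs.2]

lemma ZMod.digitsEquiv_apply (r : ZMod (m * m)) :
    ZMod.digitsEquiv r = ((r.val : ZMod m), ((r.val / m : ℕ) : ZMod m)) := rfl

lemma ZMod.digitsEquiv_mul (u r : ZMod (m * m)) :
    ZMod.digitsEquiv (u * r) =
      ((u.val : ZMod m) * (ZMod.digitsEquiv r).1,
        (u.val : ZMod m) * (ZMod.digitsEquiv r).2 +
          ((u.val * (r.val % m) / m : ℕ) : ZMod m)) := by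
  have hm : 0 < m := Nat.pos_of_neZero m
  simp only [ZMod.digitsEquiv_apply, ZMod.val_mul, Nat.mod_mul_right_div_self, ZMod.natCast_mod]
  refine Prod.ext ?_ ?_
  · simp only [(ZMod.natCast_eq_natCast_iff' _ _ m).mpr (Nat.mod_mod_of_dvd _ (dvd_mul_right m m)),
      Nat.cast_mul]
  · conv_lhs => rw [← Nat.mod_add_div r.val m, mul_add, mul_left_comm,
      Nat.add_mul_div_left _ _ hm]
    push_cast
    ring

lemma sign_mulLeft_zmod_mul_self (hm : Odd m) (u : (ZMod (m * m))ˣ) :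
    sign (Units.mulLeft u) = 1 := by
  set v := ZMod.unitsMap (dvd_mul_right m m) u
  have hv : (v : ZMod m) = ((u : ZMod (m * m)).val : ZMod m) := by
    rw [ZMod.unitsMap_val, ZMod.cast_eq_val]
  set T : ZMod m → ZMod m := fun a => (((u : ZMod (m * m)).val * a.val / m : ℕ) : ZMod m)
  have hconj : ZMod.digitsEquiv.permCongr (Units.mulLeft u) =
      prodCongrLeft (fun _ => Units.mulLeft v) *
        prodCongrRight (fun a => (Units.mulLeft v).trans (Equiv.addRight (T a))) := by
    ext p
    all_goals
      obtain ⟨r, rfl⟩ := ZMod.digitsEquiv.surjective p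
      have hval : (ZMod.digitsEquiv r).1.val = r.val % m := ZMod.val_natCast _ _
      simp [Equiv.permCongr_apply, ZMod.digitsEquiv_mul, hv, T, hval]
  have hcard : Fintype.card (ZMod m) = m := ZMod.card m
  rw [← sign_permCongr ZMod.digitsEquiv, hconj, map_mul, sign_prodCongrLeft, sign_prodCongrRight]
  simp only [sign_trans, sign_addRight_of_odd_card (hcard ▸ hm), one_mul, prod_const, card_univ,
    hcard, ← mul_pow, Int.units_mul_self, one_pow]

end Digits

variable {α : Type*} [Fintype α] [DecidableEq α]

lemma Equiv.Perm.IsCycle.exists_extendDomain_eq {c : Perm α} (hc : c.IsCycle) :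
    ∃ E : ZMod #c.support ≃ {w // w ∈ c.support}, (Equiv.addRight 1).extendDomain E = c := by
  obtain ⟨w₀, hw₀⟩ := hc.nonempty_support
  have : NeZero #c.support := ⟨hc.nonempty_support.card_pos.ne'⟩
  set E₀ : ZMod #c.support → {w // w ∈ c.support} :=
    fun r => ⟨(c ^ r.val) w₀, pow_apply_mem_support.mpr hw₀⟩
  have hE₀ (k : ℕ) : (E₀ k : α) = (c ^ k) w₀ := by
    simp only [E₀, ZMod.val_natCast, ← hc.orderOf, pow_mod_orderOf]
  have hinj : Function.Injective E₀ := by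
    intro r s hrs
    have hpow : c ^ r.val = c ^ s.val :=
      hc.pow_eq_pow_iff.mpr ⟨w₀, mem_support.mp hw₀, Subtype.ext_iff.mp hrs⟩
    have hlt (t : ZMod #c.support) : t.val ∈ Set.Iio (orderOf c) := by
      simpa [hc.orderOf] using ZMod.val_lt t
    exact ZMod.val_injective _ (pow_injOn_Iio_orderOf (hlt r) (hlt s) hpow)
  set E := Equiv.ofBijective E₀
    ((Fintype.bijective_iff_injective_and_card _).mpr
      ⟨hinj, by rw [ZMod.card, Fintype.card_coe]⟩)
  have hE_succ (r : ZMod #c.support) : (E (r + 1) : α) = c (E r) := by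
    rw [← ZMod.natCast_zmod_val r, ← Nat.cast_succ]
    simp only [E, Equiv.ofBijective_apply, hE₀, pow_succ', Perm.mul_apply]
  refine ⟨E, Equiv.ext fun w => ?_⟩
  by_cases hw : w ∈ c.support
  · obtain ⟨r, hr⟩ := E.surjective ⟨w, hw⟩
    obtain rfl : (E r : α) = w := congrArg Subtype.val hr
    rw [extendDomain_apply_image, coe_addRight, hE_succ]
  · rw [extendDomain_apply_not_subtype _ _ hw, notMem_support.mp hw]

lemma Equiv.Perm.IsCycle.exists_sign_eq_one_conj_eq_pow {c : Perm α} (hc : c.IsCycle) {m : ℕ}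
    (hm : Odd m) (hcard : #c.support = m * m) {k : ℕ} (hk : k.Coprime #c.support) :
    ∃ h : Perm α, Perm.sign h = 1 ∧ h.support ⊆ c.support ∧ h * c * h⁻¹ = c ^ k := by
  have : NeZero m := ⟨by rintro rfl; simp at hm⟩
  obtain ⟨E, hE⟩ := hcard ▸ hc.exists_extendDomain_eq
  set u := ZMod.unitOfCoprime k (hcard ▸ hk)
  refine ⟨(Units.mulLeft u).extendDomain E, ?_, fun w hw => ?_, ?_⟩
  · rw [sign_extendDomain, sign_mulLeft_zmod_mul_self hm]
  · by_contra hw'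
    exact mem_support.mp hw (extendDomain_apply_not_subtype _ _ hw')
  · have hrot : Units.mulLeft u * Equiv.addRight 1 * (Units.mulLeft u)⁻¹ =
        Equiv.addRight 1 ^ k := by
      ext r
      simp only [Perm.mul_apply, Perm.inv_def, Units.mulLeft_symm, Units.mulLeft_apply,
        coe_addRight, mul_add, Units.mul_inv_cancel_left, Equiv.addRight_pow]
      simp [u]
    have hconj := congrArg (extendDomainHom E) hrot
    rw [map_mul, map_mul, map_inv, map_pow, extendDomainHom_apply, extendDomainHom_apply,
      hE] at hconj
    exact hconj

namespace Equiv.Perm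

lemma support_subset_of_mem_zpowers {c f : Perm α} (hf : f ∈ Subgroup.zpowers c) :
    f.support ⊆ c.support := by
  obtain ⟨k, rfl⟩ := Subgroup.mem_zpowers_iff.mp hf
  exact support_zpow_le c k

lemma noncommProd_apply_of_mem {ι : Type*} [DecidableEq ι] {s : Finset ι} {f : ι → Perm α}
    (comm : (s : Set ι).Pairwise (Function.onFun Commute f)) {B : ι → Finset α}
    (hB : (s : Set ι).PairwiseDisjoint B) (hf : ∀ i ∈ s, (f i).support ⊆ B i) {i : ι}
    (hi : i ∈ s) {w : α} (hw : w ∈ B i) : s.noncommProd f comm w = f i w := by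
  rw [← s.mul_noncommProd_erase hi f comm, Perm.mul_apply]
  congr 1
  rw [← notMem_support]
  intro hw'
  obtain ⟨j, hj, hwj⟩ := mem_support_of_mem_noncommProd_support hw'
  exact disjoint_left.mp (hB (mem_of_mem_erase hj) hi (ne_of_mem_erase hj)) (hf j
    (mem_of_mem_erase hj) hwj) hw

namespace OnCycleFactors

variable {σ : Perm α} {u : Perm (Function.fixedPoints σ)}
  {v : (c : σ.cycleFactorsFinset) → Subgroup.zpowers (c : Perm α)}

lemma kerParam_apply_of_mem_support (c : σ.cycleFactorsFinset) {w : α}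
    (hw : w ∈ (c : Perm α).support) : kerParam σ (u, v) w = (v c : Perm α) w := by
  obtain ⟨c, hc⟩ := c
  obtain rfl := cycle_is_cycleOf hw hc
  rw [kerParam_apply, dif_pos hc]

lemma kerParam_apply_of_notMem_support {w : α} (hw : w ∉ σ.support) :
    kerParam σ (1, v) w = w := by
  rw [kerParam_apply, dif_neg (by rwa [cycleOf_mem_cycleFactorsFinset_iff]), map_one,
    Perm.one_apply]

lemma isCycle_of_isConj_kerParam (h : IsConj σ (kerParam σ (1, v))) (c : σ.cycleFactorsFinset) :
    (v c : Perm α).IsCycle := by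
  have hct : σ.cycleType = ∑ c, (v c : Perm α).cycleType := by
    rw [isConj_iff_cycleType_eq.mp h, cycleType_kerParam_apply_apply, cycleType_one, zero_add]
  have hsupp : ∀ c ∈ univ, #(v c : Perm α).support = #(c : Perm α).support := by
    refine (sum_eq_sum_iff_of_le fun c _ => card_le_card
      (support_subset_of_mem_zpowers (v c).2)).mp ?_
    calc ∑ c, #(v c : Perm α).support = (∑ c, (v c : Perm α).cycleType).sum := by
          simp only [Multiset.sum_sum, sum_cycleType]
      _ = ∑ c : σ.cycleFactorsFinset, #(c : Perm α).support := by
          rw [← hct, cycleType_def, Finset.sum_map_val, ← sum_coe_sort]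
          rfl
  have hcard : ∀ c ∈ univ, 1 = Multiset.card (v c : Perm α).cycleType := by
    refine (sum_eq_sum_iff_of_le fun c _ => ?_).mp ?_
    · rw [Nat.one_le_iff_ne_zero, Ne, Multiset.card_eq_zero, cycleType_eq_zero,
        ← support_eq_empty_iff, ← card_eq_zero, hsupp c (mem_univ c)]
      exact (mem_cycleFactorsFinset_iff.mp c.2).1.nonempty_support.card_pos.ne'
    · have := congrArg Multiset.card hct
      rw [Multiset.card_sum, cycleType_def, Multiset.card_map] at this
      simpa using this
  exact card_cycleType_eq_one.mp (hcard c (mem_univ c)).symm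

lemma exists_mem_alternatingGroup_conj_eq_kerParam
    (hlocal : ∀ c : σ.cycleFactorsFinset, ∃ h : Perm α,
      sign h = 1 ∧ h.support ⊆ (c : Perm α).support ∧ h * c * h⁻¹ = v c) :
    ∃ τ ∈ alternatingGroup α, τ * σ * τ⁻¹ = kerParam σ (1, v) := by
  choose h hsign hsupp hconj using hlocal
  have hdisj : Set.PairwiseDisjoint (univ : Finset σ.cycleFactorsFinset)
      fun c : σ.cycleFactorsFinset => (c : Perm α).support := fun c _ d _ hcd =>
    (cycleFactorsFinset_pairwise_disjoint σ c.2 d.2 (Subtype.coe_ne_coe.mpr hcd)).disjoint_support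
  have hcomm : Set.Pairwise (univ : Finset σ.cycleFactorsFinset) (Function.onFun Commute h) :=
    fun c _ d _ hcd => (disjoint_iff_disjoint_support.mpr
      ((hdisj (mem_univ c) (mem_univ d) hcd).mono (hsupp c) (hsupp d))).commute
  refine ⟨univ.noncommProd h hcomm, Subgroup.noncommProd_mem _ _ fun c _ => hsign c, ?_⟩
  rw [mul_inv_eq_iff_eq_mul]
  ext w
  by_cases hw : w ∈ σ.support
  · set c : σ.cycleFactorsFinset := ⟨σ.cycleOf w, cycleOf_mem_cycleFactorsFinset_iff.mpr hw⟩
    have hwc : w ∈ (c : Perm α).support :=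
      mem_support_cycleOf_iff.mpr ⟨SameCycle.refl _ _, hw⟩
    have hτ {z : α} (hz : z ∈ (c : Perm α).support) : univ.noncommProd h hcomm z = h c z :=
      noncommProd_apply_of_mem hcomm hdisj (fun c _ => hsupp c) (mem_univ c) hz
    have hσw : σ w = (c : Perm α) w := (cycleOf_apply_self σ w).symm
    have hhw : h c w ∈ (c : Perm α).support := (isInvariant_of_support_le (hsupp c) w).mpr hwc
    rw [Perm.mul_apply, Perm.mul_apply, hσw, hτ (apply_mem_support.mpr hwc), hτ hwc,
      kerParam_apply_of_mem_support c hhw, ← hconj c, Perm.mul_apply, Perm.mul_apply,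
      Perm.inv_def, symm_apply_apply]
  · have hτ : univ.noncommProd h hcomm w = w := by
      rw [← notMem_support]
      intro hw'
      obtain ⟨c, -, hwc⟩ := mem_support_of_mem_noncommProd_support hw'
      exact hw (mem_cycleFactorsFinset_support_le c.2 (hsupp c hwc))
    rw [Perm.mul_apply, Perm.mul_apply, notMem_support.mp hw, hτ,
      kerParam_apply_of_notMem_support hw]

end OnCycleFactors

open OnCycleFactors in
theorem exists_mem_alternatingGroup_conj_eq_of_commute {σ y : Perm α}
    (hcount : ∀ i, σ.cycleType.count i ≤ 1) (hfix : Fintype.card α ≤ σ.cycleType.sum + 1)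
    (hodd : ∀ i ∈ σ.cycleType, Odd i) (hsq : ∀ i ∈ σ.cycleType, IsSquare i)
    (hcomm : Commute y σ) (hconj : IsConj σ y) :
    ∃ τ ∈ alternatingGroup α, τ * σ * τ⁻¹ = y := by
  obtain ⟨⟨u, v⟩, rfl⟩ : y ∈ (kerParam σ).range := by
    rw [kerParam_range_eq_centralizer_of_count_le_one hcount]
    exact Subgroup.mem_centralizer_singleton_iff.mpr hcomm
  obtain rfl : u = 1 := by
    have : Subsingleton (Function.fixedPoints σ) :=
      Fintype.card_le_one_iff_subsingleton.mp (by rw [card_fixedPoints]; omega)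
    exact Subsingleton.elim _ _
  refine exists_mem_alternatingGroup_conj_eq_kerParam fun c => ?_
  have hc := (mem_cycleFactorsFinset_iff.mp c.2).1
  have hmem : #(c : Perm α).support ∈ σ.cycleType := by
    rw [cycleType_def]
    exact Multiset.mem_map_of_mem _ c.2
  obtain ⟨m, hm⟩ := hsq _ hmem
  obtain ⟨k, hk⟩ : (v c : Perm α) ∈ Submonoid.powers (c : Perm α) :=
    mem_powers_iff_mem_zpowers.mpr (v c).2
  have hvc := isCycle_of_isConj_kerParam hconj c
  rw [← hk] at hvc ⊢
  exact hc.exists_sign_eq_one_conj_eq_pow (Nat.odd_mul.mp (hm ▸ hodd _ hmem)).1 hm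
    (hc.orderOf ▸ hc.pow_iff.mp hvc)

end Equiv.Perm

section FullCycleType

variable {n : ℕ} {x : Perm (Fin n)}

lemma count_cycleType_le_one_of_nodup_fullCycleType (h : (fullCycleType x).Nodup) (i : ℕ) :
    x.cycleType.count i ≤ 1 :=
  Multiset.nodup_iff_count_le_one.mp (Multiset.nodup_add.mp h).1 i

lemma card_le_cycleType_sum_add_one_of_nodup_fullCycleType (h : (fullCycleType x).Nodup) :
    Fintype.card (Fin n) ≤ x.cycleType.sum + 1 := by
  have := Multiset.nodup_iff_count_le_one.mp (Multiset.nodup_add.mp h).2.1 1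
  rw [Multiset.count_replicate_self] at this
  rw [Fintype.card_fin, sum_cycleType]
  omega

lemma mem_fullCycleType_of_mem_cycleType {i : ℕ} (hi : i ∈ x.cycleType) :
    i ∈ fullCycleType x :=
  Multiset.mem_add.mpr (Or.inl hi)

end FullCycleType

/-- Let `x ∈ Aₙ` have cycle type with all parts distinct and odd, every part a perfect
square. If `x` and `y` represent the two `Aₙ`-classes into which the `Sₙ`-class of `x`
splits (i.e. `y` is conjugate to `x` in `Sₙ` but not in `Aₙ`), then `x` and `y` are not
z-conjugate in `Aₙ`: `Z_{Aₙ}(x)` and `Z_{Aₙ}(y)` are not conjugate subgroups in `Aₙ`. -/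
theorem stmt_17 (n : ℕ) (x y : Equiv.Perm (Fin n))
    (hx : x ∈ alternatingGroup (Fin n))
    (hnodup : (fullCycleType x).Nodup)
    (hodd : ∀ l ∈ fullCycleType x, Odd l)
    (hsq : ∀ l ∈ fullCycleType x, IsSquare l)
    (hconjS : IsConj x y)
    (hnotconjA : ¬ ∃ h ∈ alternatingGroup (Fin n), h * x * h⁻¹ = y) :
    ¬ ∃ g ∈ alternatingGroup (Fin n),
      altCentralizer y = (altCentralizer x).map (MulAut.conj g).toMonoidHom := by
  rintro ⟨g, hg, hmap⟩
  have hyA : y ∈ alternatingGroup (Fin n) := by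
    obtain ⟨c, rfl⟩ := isConj_iff.mp hconjS
    exact (alternatingGroup.normal).conj_mem x hx c
  have hy : y ∈ altCentralizer y := ⟨Subgroup.mem_centralizer_singleton_iff.mpr rfl, hyA⟩
  rw [hmap] at hy
  obtain ⟨z, ⟨hz, -⟩, hzy⟩ := hy
  have hcomm : Commute y (g * x * g⁻¹) :=
    hzy ▸ Commute.map (Subgroup.mem_centralizer_singleton_iff.mp hz) (MulAut.conj g)
  have hx' : IsConj x (g * x * g⁻¹) := isConj_iff.mpr ⟨g, rfl⟩
  have hct : (g * x * g⁻¹).cycleType = x.cycleType := (isConj_iff_cycleType_eq.mp hx').symm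
  obtain ⟨τ, hτ, hτy⟩ := exists_mem_alternatingGroup_conj_eq_of_commute
    (hct ▸ count_cycleType_le_one_of_nodup_fullCycleType hnodup)
    (hct ▸ card_le_cycleType_sum_add_one_of_nodup_fullCycleType hnodup)
    (hct ▸ fun i hi => hodd i (mem_fullCycleType_of_mem_cycleType hi))
    (hct ▸ fun i hi => hsq i (mem_fullCycleType_of_mem_cycleType hi))
    hcomm (hx'.symm.trans hconjS)
  exact hnotconjA ⟨τ * g, mul_mem hτ hg, by rw [← hτy]; group⟩
end

section
/- Let n ≥ 4 and let ν be a partition of n−3 into distinct odd parts all ≥ 3. Choose disjoint cycles on {4,…,n} realizing ν, let σ be their product (so σ ∈ Aₙ has cycle type 1³ν) and let τ = (1 2 3)·σ (cycle type 3¹ν). Then Z_{Aₙ}(σ) = Z_{Aₙ}(τ); in particular σ and τ are z-conjugate in Aₙ. -/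
/-!
The centralizer of a permutation `g` contains the image `K(g)` of `kerParam g`, the group
`Sym(Fix g) × ∏ ⟨cᵢ⟩` of elements commuting with every cycle `cᵢ` of `g`, with index
`∏ₖ (number of k-cycles)!`. When the cycles of `g` have odd lengths, the sign of an element of
`K(g)` is its sign on `Fix g`.

For `σ` the index is `1` and `Fix σ = {0, 1, 2}`, so `Z_{Aₙ}(σ)` embeds in the abelian group
`A₃ × ∏ ⟨σᵢ⟩`; it contains `(0 1 2)`, so its elements commute with `(0 1 2)`, hence with `τ`.
For `τ`, which has no fixed points, `K(τ) ≤ Aₙ` has index at most `2` (only the length `3`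
can occur twice). Either `Z_{Sₙ}(τ) ≤ Aₙ`, and then all lengths are distinct and the index is
`1`, or `Z_{Aₙ}(τ)` is a proper subgroup of `Z_{Sₙ}(τ)` containing `K(τ)`. In both cases
`Z_{Aₙ}(τ) = K(τ)`, whose elements commute with the cycle `(0 1 2)` of `τ`, hence with `σ`.
-/

open Equiv Equiv.Perm Subgroup Finset

namespace Equiv.Perm.OnCycleFactors

variable {α : Type*} [Fintype α] [DecidableEq α] {g : Perm α}

theorem sign_kerParam_apply_of_odd (h_odd : ∀ i ∈ g.cycleType, Odd i)
    (u : Perm (Function.fixedPoints g)) (v : (c : g.cycleFactorsFinset) → zpowers c.val) :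
    sign (kerParam g (u, v)) = sign u := by
  rw [sign_kerParam_apply_apply, Finset.prod_eq_one, mul_one]
  rintro ⟨c, hc⟩ -
  obtain ⟨k, hk⟩ := (v ⟨c, hc⟩).prop
  have hodd : Odd #c.support := h_odd _ (Multiset.mem_map_of_mem _ hc)
  rw [← hk, map_zpow, (mem_cycleFactorsFinset_iff.mp hc).1.sign, hodd.neg_one_pow, neg_neg,
    one_zpow]

theorem kerParam_range_le_alternatingGroup (h_odd : ∀ i ∈ g.cycleType, Odd i)
    (h_fixed : Fintype.card α ≤ g.cycleType.sum + 1) :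
    (kerParam g).range ≤ alternatingGroup α := by
  rintro - ⟨⟨u, v⟩, rfl⟩
  have hu : u = 1 := card_support_le_one.mp <| (Finset.card_le_univ _).trans <| by
    rw [card_fixedPoints]; omega
  rw [mem_alternatingGroup, sign_kerParam_apply_of_odd h_odd, hu, map_one]

theorem centralizer_inf_alternatingGroup_eq_kerParam_range (h_odd : ∀ i ∈ g.cycleType, Odd i)
    (h_fixed : Fintype.card α ≤ g.cycleType.sum + 1)
    (h_index : ∏ i ∈ g.cycleType.toFinset, (g.cycleType.count i).factorial ≤ 2) :
    centralizer {g} ⊓ alternatingGroup α = (kerParam g).range := by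
  have hle : (kerParam g).range ≤ centralizer {g} ⊓ alternatingGroup α :=
    le_inf kerParam_range_le_centralizer (kerParam_range_le_alternatingGroup h_odd h_fixed)
  by_cases hZ : centralizer {g} ≤ alternatingGroup α
  · rw [inf_eq_left.mpr hZ, kerParam_range_eq_centralizer_of_count_le_one
      (count_le_one_of_centralizer_le_alternating hZ)]
  refine (Subgroup.eq_of_le_of_card_ge hle ?_).symm
  have hcard : Nat.card (centralizer {g}) = Nat.card (kerParam g).range *
      ∏ i ∈ g.cycleType.toFinset, (g.cycleType.count i).factorial := by
    rw [nat_card_centralizer, Nat.card_eq_fintype_card, kerParam_range_card]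
  have hlt : Nat.card ↥(centralizer {g} ⊓ alternatingGroup α) < Nat.card (centralizer {g}) :=
    lt_of_not_ge fun h => hZ (inf_eq_left.mp (Subgroup.eq_of_le_of_card_ge inf_le_left h))
  obtain ⟨m, hm⟩ := Subgroup.card_dvd_of_le hle
  rw [hm, hcard] at hlt
  have hm_lt : m < 2 :=
    lt_of_mul_lt_mul_left (hlt.trans_le (Nat.mul_le_mul_left _ h_index)) (Nat.zero_le _)
  rw [hm]
  exact mul_le_of_le_one_right' (Nat.le_of_lt_succ hm_lt)

theorem commute_of_mem_centralizer_inf_alternatingGroup (h_odd : ∀ i ∈ g.cycleType, Odd i)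
    (h_count : ∀ i, g.cycleType.count i ≤ 1) (h_fixed : Fintype.card α ≤ g.cycleType.sum + 3)
    {x y : Perm α} (hx : x ∈ centralizer {g} ⊓ alternatingGroup α)
    (hy : y ∈ centralizer {g} ⊓ alternatingGroup α) : Commute x y := by
  rw [← kerParam_range_eq_centralizer_of_count_le_one h_count] at hx hy
  obtain ⟨⟨⟨u, v⟩, rfl⟩, hu⟩ := Subgroup.mem_inf.mp hx
  obtain ⟨⟨⟨u', v'⟩, rfl⟩, hu'⟩ := Subgroup.mem_inf.mp hy
  rw [mem_alternatingGroup, sign_kerParam_apply_of_odd h_odd] at hu hu'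
  have : IsMulCommutative (alternatingGroup (Function.fixedPoints g)) :=
    alternatingGroup.isMulCommutative_of_card_le_three <| by
      rw [Nat.card_eq_fintype_card, card_fixedPoints]; omega
  have huu' : Commute u u' :=
    congrArg Subtype.val (mul_comm' (⟨u, hu⟩ : alternatingGroup _) ⟨u', hu'⟩)
  have hvv' : Commute v v' := funext fun c => Subtype.ext <| by
    obtain ⟨k, hk⟩ := (v c).prop
    obtain ⟨l, hl⟩ := (v' c).prop
    simp only [Pi.mul_apply, Subgroup.coe_mul, ← hk, ← hl]
    exact Commute.zpow_zpow_self c.val k l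
  exact (Commute.prod huu' hvv').map (kerParam g)

end Equiv.Perm.OnCycleFactors

theorem Multiset.prod_factorial_count_cons_le_two {s : Multiset ℕ} (hs : s.Nodup) (a : ℕ) :
    ∏ i ∈ (a ::ₘ s).toFinset, ((a ::ₘ s).count i).factorial ≤ 2 := by
  rw [Finset.prod_eq_single_of_mem a (by simp) fun i _ hi => by
    rw [Multiset.count_cons_of_ne hi, Nat.factorial_eq_one]
    exact Multiset.nodup_iff_count_le_one.mp hs i]
  rw [Multiset.count_cons_self]
  exact Nat.factorial_le (Nat.succ_le_succ (Multiset.nodup_iff_count_le_one.mp hs a))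

namespace Equiv.Perm

variable {α : Type*} [Fintype α] [DecidableEq α] {σ c : Perm α}

theorem centralizer_inf_alternatingGroup_mul_threeCycle (h_odd : ∀ i ∈ σ.cycleType, Odd i)
    (h_nodup : σ.cycleType.Nodup) (h_fixed : Fintype.card α ≤ σ.cycleType.sum + 3)
    (hc : c.IsThreeCycle) (hdisj : c.Disjoint σ) :
    centralizer {c * σ} ⊓ alternatingGroup α = centralizer {σ} ⊓ alternatingGroup α := by
  have hcσ : c ∈ centralizer {σ} ⊓ alternatingGroup α :=
    ⟨mem_centralizer_singleton_iff.mpr hdisj.commute.eq, hc.sign⟩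
  have hcτ : c ∈ (c * σ).cycleFactorsFinset := by
    rw [hdisj.cycleFactorsFinset_mul_eq_union, hc.isCycle.cycleFactorsFinset_eq_singleton]
    exact Finset.mem_union_left _ (Finset.mem_singleton_self c)
  have hτ_type : (c * σ).cycleType = 3 ::ₘ σ.cycleType := by
    rw [hdisj.cycleType_mul, hc.cycleType]; rfl
  apply le_antisymm
  · intro x hx
    have hτ_odd : ∀ i ∈ (c * σ).cycleType, Odd i := by
      rw [hτ_type]
      exact Multiset.forall_mem_cons.mpr ⟨by decide, h_odd⟩
    have hker := hx
    rw [OnCycleFactors.centralizer_inf_alternatingGroup_eq_kerParam_range hτ_odd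
      (by rw [hτ_type, Multiset.sum_cons]; omega)
      (hτ_type ▸ Multiset.prod_factorial_count_cons_le_two h_nodup 3),
      OnCycleFactors.kerParam_range_eq] at hker
    obtain ⟨y, hy, rfl⟩ := hker
    have hyc : Commute (y : Perm α) c :=
      (OnCycleFactors.mem_ker_toPermHom_iff _ y).mp hy c hcτ
    have hyσ : Commute (y : Perm α) σ := by
      simpa only [inv_mul_cancel_left] using
        hyc.inv_right.mul_right (mem_centralizer_singleton_iff.mp y.prop)
    exact ⟨mem_centralizer_singleton_iff.mpr hyσ.eq, hx.2⟩
  · rintro x ⟨hxσ, hxA⟩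
    have hxc : Commute x c := OnCycleFactors.commute_of_mem_centralizer_inf_alternatingGroup h_odd
      (Multiset.nodup_iff_count_le_one.mp h_nodup) h_fixed ⟨hxσ, hxA⟩ hcσ
    exact ⟨mem_centralizer_singleton_iff.mpr
      (hxc.mul_right (mem_centralizer_singleton_iff.mp hxσ)).eq, hxA⟩

end Equiv.Perm

/-- Let `n ≥ 4` and let `ν` be a partition of `n − 3` into distinct odd parts all `≥ 3`.
Let `σ ∈ Aₙ` have cycle type `ν` and fix the three points `0, 1, 2` (so its cycle type
as a partition of `n` is `1³ν`), and let `τ = (0 1 2)·σ` (cycle type `3¹ν`). Then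
`Z_{Aₙ}(σ) = Z_{Aₙ}(τ)`; in particular `σ` and `τ` are z-conjugate in `Aₙ`. -/
theorem stmt_19 (n : ℕ) (hn : 4 ≤ n) (ν : Nat.Partition (n - 3))
    (hdist : ν.parts.Nodup) (hν : ∀ i ∈ ν.parts, Odd i ∧ 3 ≤ i)
    (σ : Equiv.Perm (Fin n)) (hσ : σ.cycleType = ν.parts)
    (h0 : (⟨0, by omega⟩ : Fin n) ∉ σ.support)
    (h1 : (⟨1, by omega⟩ : Fin n) ∉ σ.support)
    (h2 : (⟨2, by omega⟩ : Fin n) ∉ σ.support)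
    (τ : Equiv.Perm (Fin n))
    (hτ : τ = Equiv.swap (⟨0, by omega⟩ : Fin n) ⟨1, by omega⟩ *
      Equiv.swap (⟨1, by omega⟩ : Fin n) ⟨2, by omega⟩ * σ) :
    altCentralizer σ = altCentralizer τ ∧
      ∃ g ∈ alternatingGroup (Fin n),
        altCentralizer τ = (altCentralizer σ).map (MulAut.conj g).toMonoidHom := by
  set c := swap (⟨0, by omega⟩ : Fin n) ⟨1, by omega⟩ *
    swap (⟨1, by omega⟩ : Fin n) ⟨2, by omega⟩
  have hc_support : c.support = {⟨0, by omega⟩, ⟨1, by omega⟩, ⟨2, by omega⟩} :=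
    support_swap_mul_swap (by simp [Fin.ext_iff])
  have hc : c.IsThreeCycle := by
    rw [← card_support_eq_three_iff, hc_support]
    simp [Fin.ext_iff]
  have hdisj : c.Disjoint σ := by
    rw [disjoint_iff_disjoint_support, hc_support]
    simp [h0, h1, h2]
  have hZ : altCentralizer σ = altCentralizer τ :=
    hτ ▸ (centralizer_inf_alternatingGroup_mul_threeCycle (hσ ▸ fun i hi => (hν i hi).1)
      (hσ ▸ hdist) (by rw [hσ, ν.parts_sum, Fintype.card_fin]; omega) hc hdisj).symm
  refine ⟨hZ, 1, one_mem _, ?_⟩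
  rw [map_one, ← hZ]
  exact (map_id (altCentralizer σ)).symm
end
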